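/- Let S, d, N_L be natural numbers with 1 ≤ d, 1 ≤ N_L, and N_L + d < S, let η be a real number with 0 < η < 1, and let N_C be a natural number with N_C ≥ |ln η| · (1 − d/(S−N_L))^{−N_L}. Then (1 − ∏_{l=1}^{N_L} (1 − d/(S−l)))^{N_C} ≤ η. -/

import Mathlib

/-! Every factor `1 - d/(S-l)` with `l ≤ N_L` lies in `[q, 1]` for `q = 1 - d/(S-N_L) > 0`, so the
success probability `p` of one round satisfies `q ^ N_L ≤ p ≤ 1`. Since `1 - p ≤ exp (-p)`, the
breach probability `(1 - p) ^ N_C` is at most `exp (-N_C p) ≤ exp (-N_C q ^ N_L)`, and the rule for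
`N_C` makes `N_C q ^ N_L ≥ -log η`. -/

open Real Finset

theorem one_sub_pow_le_exp_neg_mul {p : ℝ} (hp : p ≤ 1) (n : ℕ) :
    (1 - p) ^ n ≤ exp (-(n * p)) :=
  calc (1 - p) ^ n ≤ exp (-p) ^ n := pow_le_pow_left₀ (by linarith) (one_sub_le_exp_neg p) n
    _ = exp (-(n * p)) := by rw [← exp_nat_mul, mul_neg]

theorem one_sub_pow_le_of_neg_log_le {p η : ℝ} {n : ℕ} (hp : p ≤ 1) (hη : 0 < η)
    (h : -log η ≤ n * p) : (1 - p) ^ n ≤ η :=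
  calc (1 - p) ^ n ≤ exp (-(n * p)) := one_sub_pow_le_exp_neg_mul hp n
    _ ≤ exp (log η) := exp_le_exp.mpr (by linarith)
    _ = η := exp_log hη

theorem pow_card_le_prod_of_le {ι : Type*} (s : Finset ι) {f : ι → ℝ} {q : ℝ} (hq : 0 ≤ q)
    (h : ∀ i ∈ s, q ≤ f i) : q ^ #s ≤ ∏ i ∈ s, f i := by
  simpa only [prod_const] using prod_le_prod (fun _ _ => hq) h

section Collusion

variable {S d NL : ℕ}

theorem one_sub_div_sub_pos (hS : NL + d < S) : 0 < 1 - (d : ℝ) / ((S : ℝ) - (NL : ℝ)) := by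
  have hS' : (NL : ℝ) + d < S := by exact_mod_cast hS
  rw [sub_pos, div_lt_one (by linarith)]
  linarith

theorem one_sub_div_sub_le_one {l : ℕ} (hl : l < S) : 1 - (d : ℝ) / ((S : ℝ) - (l : ℝ)) ≤ 1 := by
  have hl' : (l : ℝ) < S := by exact_mod_cast hl
  have : 0 ≤ (d : ℝ) / ((S : ℝ) - l) := div_nonneg d.cast_nonneg (by linarith)
  linarith

theorem one_sub_div_sub_le_of_le {l : ℕ} (hS : NL + d < S) (hl : l ≤ NL) :
    1 - (d : ℝ) / ((S : ℝ) - (NL : ℝ)) ≤ 1 - (d : ℝ) / ((S : ℝ) - (l : ℝ)) := by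
  have hS' : (NL : ℝ) + d < S := by exact_mod_cast hS
  have hl' : (l : ℝ) ≤ NL := by exact_mod_cast hl
  have : (d : ℝ) / ((S : ℝ) - l) ≤ d / ((S : ℝ) - NL) :=
    div_le_div_of_nonneg_left d.cast_nonneg (by linarith) (by linarith)
  linarith

end Collusion

theorem collusion_NC_rule_general
    (S d NL NC : ℕ) (hS : NL + d < S)
    (η : ℝ) (hη0 : 0 < η)
    (hNC : (NC : ℝ) ≥ |Real.log η| * (1 - (d : ℝ) / ((S : ℝ) - (NL : ℝ))) ^ (-(NL : ℤ))) :
    (1 - ∏ l ∈ Finset.Icc 1 NL, (1 - (d : ℝ) / ((S : ℝ) - (l : ℝ)))) ^ NC ≤ η := by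
  set q : ℝ := 1 - (d : ℝ) / ((S : ℝ) - (NL : ℝ))
  set p : ℝ := ∏ l ∈ Finset.Icc 1 NL, (1 - (d : ℝ) / ((S : ℝ) - (l : ℝ)))
  have hq : 0 < q := one_sub_div_sub_pos hS
  have hqp : q ^ NL ≤ p := by
    simpa only [Nat.card_Icc, add_tsub_cancel_right] using pow_card_le_prod_of_le (Icc 1 NL) hq.le
      fun l hl => one_sub_div_sub_le_of_le hS (mem_Icc.mp hl).2
  have hp : p ≤ 1 := prod_le_one
    (fun l hl => hq.le.trans (one_sub_div_sub_le_of_le hS (mem_Icc.mp hl).2))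
    (fun l hl => one_sub_div_sub_le_one (by have := (mem_Icc.mp hl).2; omega))
  refine one_sub_pow_le_of_neg_log_le hp hη0 ?_
  have hqNL : 0 < q ^ NL := pow_pos hq NL
  calc -log η ≤ |log η| := neg_le_abs _
    _ = |log η| * q ^ (-(NL : ℤ)) * q ^ NL := by
      rw [zpow_neg, zpow_natCast, mul_assoc, inv_mul_cancel₀ hqNL.ne', mul_one]
    _ ≤ NC * q ^ NL := mul_le_mul_of_nonneg_right hNC hqNL.le
    _ ≤ NC * p := mul_le_mul_of_nonneg_left hqp NC.cast_nonneg

/-- The paper's rule for choosing `N_C` under collusion: for `1 ≤ d`, `1 ≤ N_L`,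
`N_L + d < S`, `0 < η < 1`, and `N_C ≥ |ln η| (1 - d/(S-N_L))^{-N_L}`, the collusion
breach probability `(1 - ∏_{l=1}^{N_L}(1 - d/(S-l)))^{N_C}` is at most `η`. -/
theorem collusion_NC_rule
    (S d NL NC : ℕ) (hd : 1 ≤ d) (hNL : 1 ≤ NL) (hS : NL + d < S)
    (η : ℝ) (hη0 : 0 < η) (hη1 : η < 1)
    (hNC : (NC : ℝ) ≥ |Real.log η| * (1 - (d : ℝ) / ((S : ℝ) - (NL : ℝ))) ^ (-(NL : ℤ))) :
    (1 - ∏ l ∈ Finset.Icc 1 NL, (1 - (d : ℝ) / ((S : ℝ) - (l : ℝ)))) ^ NC ≤ η :=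
  collusion_NC_rule_general S d NL NC hS η hη0 hNC
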